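/- Inside the fraction field F of the polynomial ring K[a,b,c], the intersection of the K-subalgebra generated by {a, a⁻¹, b, ac−b, (ac−b)⁻¹} with the K-subalgebra generated by {c, c⁻¹, b, ac−b, (ac−b)⁻¹} equals the K-subalgebra generated by {a, b, c, (ac−b)⁻¹}. -/

import Mathlib

/-!
Put `R = K[a, b, c] ⊆ F` and `d = ac - b`. The first subalgebra lies in `R[1/(ad)]` and the second
in `R[1/(cd)]`, both read inside `F`. If `x` lies in both, then `u = d ^ N * x` satisfies
`a ^ n * u ∈ R` and `c ^ m * u ∈ R` for suitable exponents; since `a` is a prime of the factorial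
ring `R` not dividing `c`, this forces `u ∈ R`, i.e. `x ∈ R[1/d]`. Conversely `c = a⁻¹ (d + b)` and
`a = c⁻¹ (d + b)` lie in both subalgebras.
-/

open MvPolynomial

namespace Subalgebra

section CommRing

variable {K F : Type*} [CommSemiring K] [CommRing F] [Algebra K F]

/-- The localization `T[1/s]`, realized inside `F`. -/
def away (T : Subalgebra K F) (s : F) (hs : s ∈ T) : Subalgebra K F where
  carrier := {x | ∃ n : ℕ, s ^ n * x ∈ T}
  add_mem' := by
    rintro x y ⟨n, hx⟩ ⟨m, hy⟩
    refine ⟨n + m, ?_⟩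
    have hsum : s ^ (n + m) * (x + y) = s ^ m * (s ^ n * x) + s ^ n * (s ^ m * y) := by ring
    rw [hsum]
    exact add_mem (mul_mem (pow_mem hs m) hx) (mul_mem (pow_mem hs n) hy)
  mul_mem' := by
    rintro x y ⟨n, hx⟩ ⟨m, hy⟩
    refine ⟨n + m, ?_⟩
    have hprod : s ^ (n + m) * (x * y) = (s ^ n * x) * (s ^ m * y) := by ring
    rw [hprod]
    exact mul_mem hx hy
  algebraMap_mem' r := ⟨0, by simp⟩

variable {T : Subalgebra K F} {s : F} {hs : s ∈ T}

theorem le_away : T ≤ T.away s hs := fun x hx => ⟨0, by simpa using hx⟩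

theorem mem_away_of_mul_mem {x : F} (h : s * x ∈ T) : x ∈ T.away s hs := ⟨1, by simpa using h⟩

theorem away_mul_inf_away_mul_le {p q d : F} (hp : p ∈ T) (hq : q ∈ T) (hd : d ∈ T)
    (hcop : ∀ (u : F) (n m : ℕ), p ^ n * u ∈ T → q ^ m * u ∈ T → u ∈ T) :
    T.away (p * d) (mul_mem hp hd) ⊓ T.away (q * d) (mul_mem hq hd) ≤ T.away d hd := by
  rintro x ⟨⟨n, hpx⟩, ⟨m, hqx⟩⟩
  refine ⟨n + m, hcop _ n m ?_ ?_⟩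
  · have h : p ^ n * (d ^ (n + m) * x) = d ^ m * ((p * d) ^ n * x) := by ring
    rw [h]
    exact mul_mem (pow_mem hd m) hpx
  · have h : q ^ m * (d ^ (n + m) * x) = d ^ n * ((q * d) ^ m * x) := by ring
    rw [h]
    exact mul_mem (pow_mem hd n) hqx

end CommRing

section Field

variable {K F : Type*} [CommSemiring K] [Field F] [Algebra K F] {T S : Subalgebra K F} {s : F}

theorem away_le {hs : s ∈ T} (hTS : T ≤ S) (hs0 : s ≠ 0) (hinv : s⁻¹ ∈ S) :
    T.away s hs ≤ S := by
  rintro x ⟨n, hx⟩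
  have hx' : x = s⁻¹ ^ n * (s ^ n * x) := by
    rw [← mul_assoc, ← mul_pow, inv_mul_cancel₀ hs0, one_pow, one_mul]
  rw [hx']
  exact mul_mem (pow_mem hinv n) (hTS hx)

theorem adjoin_le_away_mul {r b d : F} (hr : r ∈ T) (hb : b ∈ T) (hd : d ∈ T)
    (hr0 : r ≠ 0) (hd0 : d ≠ 0) :
    Algebra.adjoin K {r, r⁻¹, b, d, d⁻¹} ≤ T.away (r * d) (mul_mem hr hd) := by
  rw [Algebra.adjoin_le_iff]
  rintro x (rfl | rfl | rfl | rfl | rfl)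
  · exact le_away hr
  · exact mem_away_of_mul_mem (by rwa [mul_comm r, mul_assoc, mul_inv_cancel₀ hr0, mul_one])
  · exact le_away hb
  · exact le_away hd
  · exact mem_away_of_mul_mem (by rwa [mul_assoc, mul_inv_cancel₀ hd0, mul_one])

end Field

end Subalgebra

theorem mem_range_of_pow_mul_mem_range {R F : Type*} [CommRing R] [IsDomain R] [CommRing F]
    [IsDomain F] [Algebra R F] (hinj : Function.Injective (algebraMap R F)) {p q : R}
    (hp : Prime p) (hpq : ¬ p ∣ q) {u : F} {n m : ℕ}
    (hpu : algebraMap R F p ^ n * u ∈ Set.range (algebraMap R F))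
    (hqu : algebraMap R F q ^ m * u ∈ Set.range (algebraMap R F)) :
    u ∈ Set.range (algebraMap R F) := by
  obtain ⟨f, hf⟩ := hpu
  obtain ⟨g, hg⟩ := hqu
  have hfg : q ^ m * f = p ^ n * g := hinj (by simp only [map_mul, map_pow, hf, hg]; ring)
  obtain ⟨h, rfl⟩ : p ^ n ∣ f :=
    hp.pow_dvd_of_dvd_mul_left n (fun hdvd => hpq (hp.dvd_of_dvd_pow hdvd)) ⟨g, hfg⟩
  refine ⟨h, mul_left_cancel₀ (pow_ne_zero n ?_) (by rw [← hf, map_mul, map_pow])⟩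
  exact (map_ne_zero_iff _ hinj).2 hp.ne_zero

theorem MvPolynomial.adjoin_range_algebraMap_X (σ K F : Type*) [CommSemiring K] [CommSemiring F]
    [Algebra (MvPolynomial σ K) F] [Algebra K F] [IsScalarTower K (MvPolynomial σ K) F] :
    Algebra.adjoin K (Set.range fun i => algebraMap (MvPolynomial σ K) F (X i)) =
      (IsScalarTower.toAlgHom K (MvPolynomial σ K) F).range := by
  rw [Algebra.adjoin_range_eq_range_aeval, aeval_unique (IsScalarTower.toAlgHom K _ F)]
  rfl

section Field

variable {K F : Type*} [CommSemiring K] [Field F] [Algebra K F] {a b : F}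

theorem mem_adjoin_inv_mul_sub (c : F) (ha : a ≠ 0) :
    c ∈ Algebra.adjoin K {a, a⁻¹, b, a * c - b, (a * c - b)⁻¹} := by
  have h : a⁻¹ * ((a * c - b) + b) ∈ Algebra.adjoin K {a, a⁻¹, b, a * c - b, (a * c - b)⁻¹} :=
    mul_mem (Algebra.subset_adjoin (by simp))
      (add_mem (Algebra.subset_adjoin (by simp)) (Algebra.subset_adjoin (by simp)))
  rwa [sub_add_cancel, inv_mul_cancel_left₀ ha] at h

theorem adjoin_le_inf_adjoin {c : F} (ha : a ≠ 0) (hc : c ≠ 0) :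
    Algebra.adjoin K {a, b, c, (a * c - b)⁻¹} ≤
      Algebra.adjoin K {a, a⁻¹, b, a * c - b, (a * c - b)⁻¹} ⊓
        Algebra.adjoin K {c, c⁻¹, b, a * c - b, (a * c - b)⁻¹} := by
  rw [Algebra.adjoin_le_iff]
  rintro x (rfl | rfl | rfl | rfl)
  · have hx := mem_adjoin_inv_mul_sub (K := K) (b := b) x hc
    rw [mul_comm c x] at hx
    exact ⟨Algebra.subset_adjoin (by simp), hx⟩
  · exact ⟨Algebra.subset_adjoin (by simp), Algebra.subset_adjoin (by simp)⟩
  · exact ⟨mem_adjoin_inv_mul_sub x ha, Algebra.subset_adjoin (by simp)⟩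
  · exact ⟨Algebra.subset_adjoin (by simp), Algebra.subset_adjoin (by simp)⟩

end Field

theorem stmt2_general (K : Type*) [Field K]
    (F : Type*) [Field F] [Algebra (MvPolynomial (Fin 3) K) F]
    [IsFractionRing (MvPolynomial (Fin 3) K) F]
    [Algebra K F] [IsScalarTower K (MvPolynomial (Fin 3) K) F]
    (a b c : F)
    (ha : a = algebraMap (MvPolynomial (Fin 3) K) F (X 0))
    (hb : b = algebraMap (MvPolynomial (Fin 3) K) F (X 1))
    (hc : c = algebraMap (MvPolynomial (Fin 3) K) F (X 2)) :
    Algebra.adjoin K {a, a⁻¹, b, a * c - b, (a * c - b)⁻¹} ⊓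
      Algebra.adjoin K {c, c⁻¹, b, a * c - b, (a * c - b)⁻¹} =
    Algebra.adjoin K {a, b, c, (a * c - b)⁻¹} := by
  have hinj := IsFractionRing.injective (MvPolynomial (Fin 3) K) F
  have hTle : (IsScalarTower.toAlgHom K (MvPolynomial (Fin 3) K) F).range ≤
      Algebra.adjoin K {a, b, c, (a * c - b)⁻¹} := by
    rw [← adjoin_range_algebraMap_X]
    refine Algebra.adjoin_mono (Set.range_subset_iff.2 fun i => ?_)
    fin_cases i <;> simp [ha, hb, hc]
  set T := (IsScalarTower.toAlgHom K (MvPolynomial (Fin 3) K) F).range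
  have haT : a ∈ T := ⟨X 0, ha.symm⟩
  have hbT : b ∈ T := ⟨X 1, hb.symm⟩
  have hcT : c ∈ T := ⟨X 2, hc.symm⟩
  have hdT : a * c - b ∈ T := sub_mem (mul_mem haT hcT) hbT
  have ha0 : a ≠ 0 := by rw [ha, map_ne_zero_iff _ hinj]; exact X_ne_zero _
  have hc0 : c ≠ 0 := by rw [hc, map_ne_zero_iff _ hinj]; exact X_ne_zero _
  have hd0 : a * c - b ≠ 0 := by
    rw [ha, hb, hc, ← map_mul, ← map_sub, map_ne_zero_iff _ hinj]
    intro h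
    simpa using congrArg (eval ![0, 1, 0]) h
  have hcop : ∀ (u : F) (n m : ℕ), a ^ n * u ∈ T → c ^ m * u ∈ T → u ∈ T := by
    subst ha hc
    exact fun u n m => mem_range_of_pow_mul_mem_range hinj X_prime (by simp [X_dvd_X])
  refine le_antisymm ?_ (adjoin_le_inf_adjoin ha0 hc0)
  calc _ ≤ T.away (a * (a * c - b)) _ ⊓ T.away (c * (a * c - b)) _ :=
        inf_le_inf (Subalgebra.adjoin_le_away_mul haT hbT hdT ha0 hd0)
          (Subalgebra.adjoin_le_away_mul hcT hbT hdT hc0 hd0)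
    _ ≤ T.away (a * c - b) hdT := Subalgebra.away_mul_inf_away_mul_le haT hcT hdT hcop
    _ ≤ _ := Subalgebra.away_le hTle hd0 (Algebra.subset_adjoin (by simp))

/-- In the fraction field `F` of `K[a,b,c]`, the intersection of the `K`-subalgebra
generated by `{a, a⁻¹, b, ac−b, (ac−b)⁻¹}` with the `K`-subalgebra generated by
`{c, c⁻¹, b, ac−b, (ac−b)⁻¹}` equals the `K`-subalgebra generated by
`{a, b, c, (ac−b)⁻¹}`. -/
theorem stmt2 (K : Type*) [Field K] [IsAlgClosed K] [CharZero K]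
    (F : Type*) [Field F] [Algebra (MvPolynomial (Fin 3) K) F]
    [IsFractionRing (MvPolynomial (Fin 3) K) F]
    [Algebra K F] [IsScalarTower K (MvPolynomial (Fin 3) K) F]
    (a b c : F)
    (ha : a = algebraMap (MvPolynomial (Fin 3) K) F (X 0))
    (hb : b = algebraMap (MvPolynomial (Fin 3) K) F (X 1))
    (hc : c = algebraMap (MvPolynomial (Fin 3) K) F (X 2)) :
    Algebra.adjoin K {a, a⁻¹, b, a * c - b, (a * c - b)⁻¹} ⊓
      Algebra.adjoin K {c, c⁻¹, b, a * c - b, (a * c - b)⁻¹} =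
    Algebra.adjoin K {a, b, c, (a * c - b)⁻¹} :=
  stmt2_general K F a b c ha hb hc
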